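/- arXiv:1901.09508 — 2 statements merged into one kernel-verified Lean document; each statement's English description precedes it below -/
import Mathlib

section
/- Let G be a group and call a subset X ⊆ G generic if finitely many left translates of X cover G, and weakly generic if there is a non-generic subset Y ⊆ G with X ∪ Y generic. Then the collection of non-weakly-generic subsets of G is closed under subsets and under finite unions (i.e., forms an ideal in the Boolean algebra of subsets of G). -/
/-- A subset of a group is generic if finitely many left translates of it cover the group. -/
def Generic {G : Type*} [Group G] (A : Set G) : Prop :=
  ∃ F : Finset G, ∀ x : G, ∃ g ∈ F, g⁻¹ * x ∈ A

/-- A subset is weakly generic if its union with some non-generic set is generic. -/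
def WeaklyGeneric {G : Type*} [Group G] (A : Set G) : Prop :=
  ∃ B : Set G, ¬ Generic B ∧ Generic (A ∪ B)

section

variable {G : Type*} [Group G] {A B : Set G}

theorem Generic.mono (hAB : A ⊆ B) (hA : Generic A) : Generic B := by
  obtain ⟨F, hF⟩ := hA
  refine ⟨F, fun x => ?_⟩
  obtain ⟨g, hg, hx⟩ := hF x
  exact ⟨g, hg, hAB hx⟩

theorem WeaklyGeneric.mono (hAB : A ⊆ B) (hA : WeaklyGeneric A) : WeaklyGeneric B := by
  obtain ⟨C, hC, hAC⟩ := hA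
  exact ⟨C, hC, hAC.mono (Set.union_subset_union_left C hAB)⟩

/-- If `A ∪ B ∪ C` is generic with `C` non-generic, either `B ∪ C` is generic, witnessing that
`B` is weakly generic, or it is not, and then it witnesses that `A` is weakly generic. -/
theorem WeaklyGeneric.of_union (h : WeaklyGeneric (A ∪ B)) :
    WeaklyGeneric A ∨ WeaklyGeneric B := by
  obtain ⟨C, hC, hABC⟩ := h
  by_cases hBC : Generic (B ∪ C)
  · exact Or.inr ⟨C, hC, hBC⟩
  · exact Or.inl ⟨B ∪ C, hBC, by rwa [← Set.union_assoc]⟩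

end

theorem non_weakly_generic_is_ideal {G : Type*} [Group G] :
    (∀ A B : Set G, A ⊆ B → ¬ WeaklyGeneric B → ¬ WeaklyGeneric A) ∧
    (∀ A B : Set G, ¬ WeaklyGeneric A → ¬ WeaklyGeneric B → ¬ WeaklyGeneric (A ∪ B)) :=
  ⟨fun _ _ hAB hB hA => hB (hA.mono hAB),
    fun _ _ hA hB hAB => hAB.of_union.elim hA hB⟩
end

section
/- In the p-adic field ℚ_p, the set of nonzero n-th powers P_n = {x ∈ ℚ_p* : ∃ y, y^n = x} is an open subgroup of finite index in the multiplicative group ℚ_p*. -/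
/-!
Openness: by Hensel's lemma applied to `X ^ n - a` at the approximate root `1`, where the
derivative is `n`, every `x` with `‖x - 1‖ < ‖n‖ ^ 2` is an `n`-th power, so the subgroup of
`n`-th powers contains a neighbourhood of `1`. Finite index: dividing by the `n`-th power
`p ^ (n * ⌊v(x) / n⌋)` brings any `x` into the compact annulus `p ^ (-n) ≤ ‖x‖ ≤ 1`, so the
quotient, which is discrete since the subgroup is open, is the image of a compact set.
-/

open Polynomial Topology

theorem PadicInt.exists_pow_eq_of_norm_sub_one_lt {p : ℕ} [Fact p.Prime] {n : ℕ} {a : ℤ_[p]}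
    (h : ‖a - 1‖ < ‖(n : ℤ_[p])‖ ^ 2) : ∃ z : ℤ_[p], z ^ n = a := by
  have hnorm : ‖(X ^ n - C a).aeval (1 : ℤ_[p])‖ <
      ‖(X ^ n - C a).derivative.aeval (1 : ℤ_[p])‖ ^ 2 := by
    simpa [norm_sub_rev, derivative_X_pow] using h
  obtain ⟨z, hz, -⟩ := hensels_lemma hnorm
  exact ⟨z, by simpa [sub_eq_zero] using hz⟩

theorem Padic.exists_pow_eq_of_norm_sub_one_lt {p : ℕ} [Fact p.Prime] {n : ℕ} {x : ℚ_[p]}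
    (h : ‖x - 1‖ < ‖(n : ℚ_[p])‖ ^ 2) : ∃ y : ℚ_[p], y ^ n = x := by
  have hx : ‖x‖ ≤ 1 := by
    have : ‖x - 1‖ < 1 :=
      h.trans_le (pow_le_one₀ (norm_nonneg _) (by simpa using Padic.norm_int_le_one (p := p) n))
    simpa using (Padic.nonarchimedean (x - 1) 1).trans (max_le this.le norm_one.le)
  obtain ⟨z, hz⟩ := PadicInt.exists_pow_eq_of_norm_sub_one_lt (a := ⟨x, hx⟩) h
  exact ⟨z, by simpa using congrArg ((↑) : ℤ_[p] → ℚ_[p]) hz⟩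

theorem Units.mem_range_powMonoidHom_of_pow_eq {M : Type*} [CommMonoid M] {n : ℕ} (hn : n ≠ 0)
    {u : Mˣ} {y : M} (hy : y ^ n = u) : u ∈ (powMonoidHom n : Mˣ →* Mˣ).range := by
  obtain ⟨w, rfl⟩ := (isUnit_pow_iff hn).mp (hy ▸ u.isUnit)
  exact ⟨w, Units.ext hy⟩

theorem Subgroup.finiteIndex_of_isOpen_of_isCompact {G : Type*} [Group G] [TopologicalSpace G]
    [IsTopologicalGroup G] {H : Subgroup G} (hH : IsOpen (H : Set G)) {K : Set G}
    (hK : IsCompact K) (hKH : ∀ g : G, ∃ k ∈ K, k⁻¹ * g ∈ H) : H.FiniteIndex := by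
  have := QuotientGroup.discreteTopology hH
  have hsurj : QuotientGroup.mk '' K = (Set.univ : Set (G ⧸ H)) := by
    refine Set.eq_univ_of_forall fun q ↦ ?_
    induction q using QuotientGroup.induction_on with | H g => ?_
    obtain ⟨k, hk, hkg⟩ := hKH g
    exact ⟨k, hk, QuotientGroup.eq.mpr hkg⟩
  have : Finite (G ⧸ H) := by
    rw [← Set.finite_univ_iff, ← hsurj]
    exact (hK.image QuotientGroup.continuous_mk).finite_of_discrete
  exact Subgroup.finiteIndex_of_finite_quotient

theorem Units.isCompact_setOf_norm_mem_Icc {𝕜 : Type*} [NormedField 𝕜] [ProperSpace 𝕜]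
    {r R : ℝ} (hr : 0 < r) : IsCompact {u : 𝕜ˣ | r ≤ ‖(u : 𝕜)‖ ∧ ‖(u : 𝕜)‖ ≤ R} := by
  rw [Units.isEmbedding_val₀.isCompact_iff]
  have himage : ((↑) : 𝕜ˣ → 𝕜) '' {u | r ≤ ‖(u : 𝕜)‖ ∧ ‖(u : 𝕜)‖ ≤ R} =
      {x | r ≤ ‖x‖} ∩ Metric.closedBall 0 R := by
    ext x
    refine ⟨?_, fun ⟨hrx, hxR⟩ ↦ ?_⟩
    · rintro ⟨u, hu, rfl⟩
      simpa using hu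
    · have hx0 : x ≠ 0 := norm_pos_iff.mp (hr.trans_le hrx)
      exact ⟨Units.mk0 x hx0, ⟨hrx, by simpa using hxR⟩, rfl⟩
  rw [himage]
  exact (isCompact_closedBall 0 R).inter_left (isClosed_le continuous_const continuous_norm)

theorem Padic.exists_norm_mem_Icc_mul_pow {p : ℕ} [Fact p.Prime] {n : ℕ} (hn : 0 < n)
    (x : ℚ_[p]ˣ) : ∃ k h : ℚ_[p]ˣ, x = k * h ^ n ∧
      (p : ℝ) ^ (-(n : ℤ)) ≤ ‖(k : ℚ_[p])‖ ∧ ‖(k : ℚ_[p])‖ ≤ 1 := by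
  have hp : (1 : ℝ) < p := by exact_mod_cast (Fact.out : p.Prime).one_lt
  obtain ⟨v, hv⟩ : ∃ v, (x : ℚ_[p]).valuation = v := ⟨_, rfl⟩
  set h : ℚ_[p]ˣ := Units.mk0 (p : ℚ_[p]) (by simp [(Fact.out : p.Prime).ne_zero]) ^ (v / n)
  have hnorm : ‖((x * (h ^ n)⁻¹ : ℚ_[p]ˣ) : ℚ_[p])‖ = (p : ℝ) ^ (-(v % n)) := by
    simp only [h, Units.val_mul, Units.val_inv_eq_inv_val, Units.val_pow_eq_pow_val,
      Units.val_zpow_eq_zpow_val, Units.val_mk0, norm_mul, norm_inv, norm_pow, Padic.norm_p_zpow,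
      Padic.norm_eq_zpow_neg_valuation x.ne_zero, hv, zpow_neg, inv_pow, inv_inv, Int.emod_def,
      neg_sub]
    rw [← zpow_natCast, ← zpow_mul, ← zpow_neg, ← zpow_add₀ (by positivity)]
    congr 1
    ring
  refine ⟨x * (h ^ n)⁻¹, h, by group, ?_, ?_⟩ <;> rw [hnorm]
  · exact zpow_le_zpow_right₀ hp.le (by have := Int.emod_lt_of_pos v (by omega : (0:ℤ) < n); omega)
  · exact zpow_le_one_of_nonpos₀ hp.le (by have := Int.emod_nonneg v (by omega : (n:ℤ) ≠ 0); omega)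

theorem nthPowers_open_finiteIndex (p : ℕ) [Fact p.Prime] (n : ℕ) (hn : 1 ≤ n) :
    IsOpen (((powMonoidHom n : ℚ_[p]ˣ →* ℚ_[p]ˣ).range : Set ℚ_[p]ˣ)) ∧
    ((powMonoidHom n : ℚ_[p]ˣ →* ℚ_[p]ˣ).range).FiniteIndex := by
  have hn0 : (n : ℚ_[p]) ≠ 0 := Nat.cast_ne_zero.mpr (by omega)
  have hball : Units.val ⁻¹' Metric.ball 1 (‖(n : ℚ_[p])‖ ^ 2) ∈ 𝓝 (1 : ℚ_[p]ˣ) :=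
    Units.continuous_val.continuousAt.preimage_mem_nhds (Metric.ball_mem_nhds _ (by positivity))
  have hopen : IsOpen (((powMonoidHom n : ℚ_[p]ˣ →* ℚ_[p]ˣ).range : Set ℚ_[p]ˣ)) := by
    refine Subgroup.isOpen_of_mem_nhds _ (Filter.mem_of_superset hball fun u hu ↦ ?_)
    obtain ⟨y, hy⟩ := Padic.exists_pow_eq_of_norm_sub_one_lt (by simpa [dist_eq_norm] using hu)
    exact Units.mem_range_powMonoidHom_of_pow_eq (by omega) hy
  have hp : (0 : ℝ) < p := by exact_mod_cast (Fact.out : p.Prime).pos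
  refine ⟨hopen, Subgroup.finiteIndex_of_isOpen_of_isCompact hopen
    (Units.isCompact_setOf_norm_mem_Icc (R := 1) (zpow_pos hp (-(n : ℤ)))) fun x ↦ ?_⟩
  obtain ⟨k, h, rfl, hk⟩ := Padic.exists_norm_mem_Icc_mul_pow hn x
  exact ⟨k, hk, h, by simp⟩
end
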